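/- arXiv:2410.04771 — 7 statements merged into one kernel-verified Lean document; each statement's English description precedes it below -/
import Mathlib

section
/- Let α and γ be finite strings over a linearly ordered alphabet with γ nonempty. If α is co-lexicographically strictly smaller than γ and γ is not a suffix of α, then for every finite string β, α is co-lexicographically strictly smaller than βγ. -/
/-- Co-lexicographic order on finite strings: lexicographic order on reverses. -/
def ListColex {Sig : Type*} [LinearOrder Sig] (a b : List Sig) : Prop :=
  List.Lex (· < ·) a.reverse b.reverse

theorem stmt_1_general {Sig : Type*} [LinearOrder Sig] (α γ : List Sig)
    (h : ListColex α γ) :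
    ∀ β : List Sig, ListColex α (β ++ γ) := by
  intro β
  rw [ListColex, List.reverse_append]
  exact List.Lex.append_right _ _ h

/-- If `γ` is nonempty, `α ≺ γ` co-lexicographically and `γ` is not a suffix of `α`,
then `α ≺ βγ` for every string `β`. -/
theorem stmt_1 {Sig : Type*} [LinearOrder Sig] (α γ : List Sig) (hγ : γ ≠ [])
    (h : ListColex α γ) (hsuf : ¬ γ <:+ α) :
    ∀ β : List Sig, ListColex α (β ++ γ) :=
  stmt_1_general α γ h
end

section
/- Let α₁ ≺ α₂ ≺ ⋯ ≺ α_p be finite strings over a linearly ordered alphabet, co-lexicographically increasing, and let γ be a nonempty string such that α_p ≺ α₁γ. Then for all integers k ≥ 0, the strings α₁γ^k ≺ ⋯ ≺ α_pγ^k ≺ α₁γ^{k+1} ≺ ⋯ ≺ α_pγ^{k+1} form a co-lexicographically strictly increasing sequence; in particular, the doubly-indexed sequence (α_iγ^k) ordered by (k,i) lexicographically is strictly increasing in co-lex order. -/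
/-- Co-lexicographic order on finite strings: lexicographic order on reverses. -/
def ColexStr {Sig : Type*} [LinearOrder Sig] (a b : List Sig) : Prop :=
  List.Lex (· < ·) a.reverse b.reverse

/-- `k`-fold concatenation of a string with itself. -/
def listPow {Sig : Type*} (γ : List Sig) (k : ℕ) : List Sig :=
  (List.replicate k γ).flatten

/-! Appending a common suffix preserves co-lex order, so each level `k ↦ (α i γ^k)_i` is
increasing, and appending `γ^k` to `α_p ≺ α₁γ` gives `α_p γ^k ≺ α₁ γ^(k+1)`, which links level `k`
to level `k + 1`. Reading reversed strings in the linear order on `List`, this is a family of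
strictly monotone blocks, each starting above the end of the previous one, hence strictly
monotone on `ℕ ×ₗ Fin (n + 1)`. -/

theorem strictMono_lex_uncurry {ι β : Type*} [PartialOrder ι] [BoundedOrder ι] [Preorder β]
    {f : ℕ → ι → β} (hf : ∀ k, StrictMono (f k)) (hstep : ∀ k, f k ⊤ < f (k + 1) ⊥) :
    StrictMono fun p : ℕ ×ₗ ι => f (ofLex p).1 (ofLex p).2 := by
  have hnext (k : ℕ) (i i' : ι) : f k i < f (k + 1) i' :=
    calc f k i ≤ f k ⊤ := (hf k).monotone le_top
      _ < f (k + 1) ⊥ := hstep k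
      _ ≤ f (k + 1) i' := (hf (k + 1)).monotone bot_le
  rintro ⟨k, i⟩ ⟨k', i'⟩ h
  rcases Prod.Lex.toLex_lt_toLex.1 h with hk | ⟨rfl, hi⟩
  · obtain ⟨m, rfl⟩ := Nat.exists_eq_add_of_lt hk
    calc f k i < f (k + 1) i' := hnext k i i'
      _ ≤ f (k + m + 1) i' :=
        (strictMono_nat_of_lt_succ fun j => hnext j i' i').monotone (by omega)
  · exact hf k hi

theorem ColexStr.append_right {Sig : Type*} [LinearOrder Sig] {a b : List Sig} (c : List Sig)
    (h : ColexStr a b) : ColexStr (a ++ c) (b ++ c) := by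
  rw [ColexStr, List.reverse_append, List.reverse_append]
  exact List.Lex.append_left _ h _

theorem listPow_succ {Sig : Type*} (γ : List Sig) (k : ℕ) :
    listPow γ (k + 1) = γ ++ listPow γ k := by
  simp only [listPow, List.replicate_succ, List.flatten_cons]

theorem stmt_2_general {Sig : Type*} [LinearOrder Sig] (n : ℕ) (α : Fin (n + 1) → List Sig)
    (γ : List Sig)
    (hmono : ∀ i j : Fin (n + 1), i < j → ColexStr (α i) (α j))
    (hlast : ColexStr (α (Fin.last n)) (α 0 ++ γ)) :
    ∀ (k k' : ℕ) (i i' : Fin (n + 1)), (k < k' ∨ (k = k' ∧ i < i')) →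
      ColexStr (α i ++ listPow γ k) (α i' ++ listPow γ k') := by
  have hblock (k : ℕ) : StrictMono fun i => (α i ++ listPow γ k).reverse :=
    fun i j hij => (hmono i j hij).append_right _
  have hstep (k : ℕ) :
      (α ⊤ ++ listPow γ k).reverse < (α ⊥ ++ listPow γ (k + 1)).reverse := by
    rw [listPow_succ, ← List.append_assoc]
    exact hlast.append_right _
  intro k k' i i' h
  exact strictMono_lex_uncurry hblock hstep (a := toLex (k, i)) (b := toLex (k', i'))
    (Prod.Lex.toLex_lt_toLex.2 h)

/-- If `α₀ ≺ ⋯ ≺ α_n` are co-lexicographically increasing strings, `γ` is nonempty and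
`α_n ≺ α₀γ`, then the doubly-indexed family `α_i γ^k`, ordered lexicographically by
`(k, i)`, is strictly increasing in co-lex order. -/
theorem stmt_2 {Sig : Type*} [LinearOrder Sig] (n : ℕ) (α : Fin (n + 1) → List Sig)
    (γ : List Sig) (hγ : γ ≠ [])
    (hmono : ∀ i j : Fin (n + 1), i < j → ColexStr (α i) (α j))
    (hlast : ColexStr (α (Fin.last n)) (α 0 ++ γ)) :
    ∀ (k k' : ℕ) (i i' : Fin (n + 1)), (k < k' ∨ (k = k' ∧ i < i')) →
      ColexStr (α i ++ listPow γ k) (α i' ++ listPow γ k') :=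
  stmt_2_general n α γ hmono hlast
end

section
/- Let A be a DFA with state set Q and suppose S = {u₁, …, u_p} ⊆ Q is entangled, i.e., there exists a co-lexicographically monotone sequence of strings (α_t) such that every u ∈ S satisfies δ(s, α_t) = u for infinitely many t. Then for every two distinct states u, v ∈ S, the open co-lex intervals (inf I_u, sup I_u) and (inf I_v, sup I_v) have a nonempty intersection. -/
/-- Co-lexicographic order on finite strings: lexicographic order on reverses. -/
def StrColex {Sig : Type*} [LinearOrder Sig] (a b : List Sig) : Prop :=
  List.Lex (· < ·) a.reverse b.reverse

/-- Reflexive co-lexicographic order. -/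
def ColexLe {Sig : Type*} [LinearOrder Sig] (a b : List Sig) : Prop :=
  a = b ∨ StrColex a b

/-- A finite or left-infinite string, represented by its sequence of characters read
from the right end (`none` signals that the string is exhausted). -/
def CStr (Sig : Type*) := ℕ → Option Sig

/-- The representation of a finite string as a `CStr`. -/
def toCStr {Sig : Type*} (a : List Sig) : CStr Sig := fun i => a.reverse[i]?

/-- The left-infinite string `γ^ω = ⋯γγγ` (for nonempty `γ`) as a `CStr`. -/
def omegaCStr {Sig : Type*} (γ : List Sig) : CStr Sig :=
  fun i => γ.reverse[i % γ.length]?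

/-- Strict co-lexicographic order on finite or left-infinite strings: reading from the
right, at the first position where the two strings differ, either the first string is
exhausted or its character is smaller. -/
def cstrLt {Sig : Type*} [LinearOrder Sig] (s t : CStr Sig) : Prop :=
  ∃ j, (∀ i, i < j → s i = t i) ∧
    ((s j = none ∧ t j ≠ none) ∨ ∃ a b, s j = some a ∧ t j = some b ∧ a < b)

/-- Non-strict co-lexicographic order on finite or left-infinite strings. -/
def cstrLe {Sig : Type*} [LinearOrder Sig] (s t : CStr Sig) : Prop :=
  s = t ∨ cstrLt s t

/-- `w` is a co-lexicographic lower bound of the set `A` of finite strings. -/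
def IsColexLB {Sig : Type*} [LinearOrder Sig] (w : CStr Sig) (A : Set (List Sig)) : Prop :=
  ∀ a ∈ A, cstrLe w (toCStr a)

/-- `w` is a co-lexicographic upper bound of the set `A` of finite strings. -/
def IsColexUB {Sig : Type*} [LinearOrder Sig] (w : CStr Sig) (A : Set (List Sig)) : Prop :=
  ∀ a ∈ A, cstrLe (toCStr a) w

/-- `w` is the co-lexicographic infimum of the set `A` of finite strings. -/
def IsColexInf {Sig : Type*} [LinearOrder Sig] (w : CStr Sig) (A : Set (List Sig)) : Prop :=
  IsColexLB w A ∧ ∀ w', IsColexLB w' A → cstrLe w' w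

/-- `w` is the co-lexicographic supremum of the set `A` of finite strings. -/
def IsColexSup {Sig : Type*} [LinearOrder Sig] (w : CStr Sig) (A : Set (List Sig)) : Prop :=
  IsColexUB w A ∧ ∀ w', IsColexUB w' A → cstrLe w w'

/-- The extension of a (total) DFA transition function to strings. -/
def deltaStar {Q Sig : Type*} (δ : Q → Sig → Q) (q : Q) (a : List Sig) : Q :=
  a.foldl δ q

/-- `Ireach δ s u` is the set `I_u` of strings leading from the source `s` to `u`. -/
def Ireach {Q Sig : Type*} (δ : Q → Sig → Q) (s u : Q) : Set (List Sig) :=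
  {a | deltaStar δ s a = u}

/-- Membership of a finite string in the open co-lex interval `(lo, hi)`. -/
def inOpenInterval {Sig : Type*} [LinearOrder Sig] (lo hi : CStr Sig) (a : List Sig) : Prop :=
  cstrLt lo (toCStr a) ∧ cstrLt (toCStr a) hi

/-- A set `S` of states is entangled: there is a co-lexicographically monotone sequence
of strings hitting every state of `S` infinitely often. -/
def Entangled {Q Sig : Type*} [LinearOrder Sig] (δ : Q → Sig → Q) (s : Q) (S : Set Q) : Prop :=
  ∃ a : ℕ → List Sig,
    ((∀ t t', t ≤ t' → ColexLe (a t) (a t')) ∨ (∀ t t', t ≤ t' → ColexLe (a t') (a t))) ∧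
    ∀ u ∈ S, ∀ t, ∃ t', t ≤ t' ∧ deltaStar δ s (a t') = u

/-! Along a monotone sequence, consecutive terms reaching different states are strictly
co-lex ordered. Picking indices `t₁ ≤ ⋯ ≤ t₅` whose terms reach `u, v, u, v, u` gives a strict
chain `α₁ ≺ ⋯ ≺ α₅` (or the reverse chain), and the middle string `α₃` lies strictly between
two strings of `I_u` and strictly between two strings of `I_v`, hence in both open intervals. -/

lemma exists_getElem?_of_lex {α : Type*} {r : α → α → Prop} {l m : List α}
    (h : List.Lex r l m) :
    ∃ j : ℕ, (∀ i, i < j → l[i]? = m[i]?) ∧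
      ((l[j]? = none ∧ m[j]? ≠ none) ∨ ∃ a b, l[j]? = some a ∧ m[j]? = some b ∧ r a b) := by
  induction h with
  | nil => exact ⟨0, nofun, Or.inl ⟨rfl, by simp⟩⟩
  | cons _ ih =>
    obtain ⟨j, heq, hdiff⟩ := ih
    refine ⟨j + 1, ?_, by simpa using hdiff⟩
    rintro (_ | i) hi
    · rfl
    · exact heq i (Nat.lt_of_succ_lt_succ hi)
  | rel hab => exact ⟨0, nofun, Or.inr ⟨_, _, rfl, rfl, hab⟩⟩

section Colex

variable {Sig : Type*} [LinearOrder Sig]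

lemma StrColex.cstrLt_toCStr {a b : List Sig} (h : StrColex a b) :
    cstrLt (toCStr a) (toCStr b) :=
  exists_getElem?_of_lex h

lemma ColexLe.cstrLt_toCStr_of_ne {a b : List Sig} (h : ColexLe a b) (hne : a ≠ b) :
    cstrLt (toCStr a) (toCStr b) :=
  (h.resolve_left hne).cstrLt_toCStr

lemma cstrLt.trans {s t r : CStr Sig} (h₁ : cstrLt s t) (h₂ : cstrLt t r) : cstrLt s r := by
  obtain ⟨j₁, e₁, d₁⟩ := h₁
  obtain ⟨j₂, e₂, d₂⟩ := h₂
  rcases lt_trichotomy j₁ j₂ with h | rfl | h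
  · refine ⟨j₁, fun i hi => (e₁ i hi).trans (e₂ i (hi.trans h)), ?_⟩
    rwa [← e₂ j₁ h]
  · refine ⟨j₁, fun i hi => (e₁ i hi).trans (e₂ i hi), ?_⟩
    rcases d₁ with ⟨hs, ht⟩ | ⟨a, b, ha, hb, hab⟩ <;>
      rcases d₂ with ⟨ht', hr⟩ | ⟨c, d, hc, hd, hcd⟩
    · exact absurd ht' ht
    · exact Or.inl ⟨hs, by simp [hd]⟩
    · simp [hb] at ht'
    · obtain rfl : b = c := Option.some.inj (hb.symm.trans hc)
      exact Or.inr ⟨a, d, ha, hd, hab.trans hcd⟩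
  · refine ⟨j₂, fun i hi => (e₁ i (hi.trans h)).trans (e₂ i hi), ?_⟩
    rwa [e₁ j₂ h]

lemma cstrLe.trans_lt {s t r : CStr Sig} (h₁ : cstrLe s t) (h₂ : cstrLt t r) :
    cstrLt s r := by
  rcases h₁ with rfl | h₁
  exacts [h₂, h₁.trans h₂]

lemma cstrLt.trans_le {s t r : CStr Sig} (h₁ : cstrLt s t) (h₂ : cstrLe t r) :
    cstrLt s r := by
  rcases h₂ with rfl | h₂
  exacts [h₁, h₁.trans h₂]

lemma inOpenInterval_of_lt_of_lt {lo hi : CStr Sig} {A : Set (List Sig)} {a b c : List Sig}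
    (hlo : IsColexLB lo A) (hhi : IsColexUB hi A) (ha : a ∈ A) (hb : b ∈ A)
    (hac : cstrLt (toCStr a) (toCStr c)) (hcb : cstrLt (toCStr c) (toCStr b)) :
    inOpenInterval lo hi c :=
  ⟨(hlo a ha).trans_lt hac, hcb.trans_le (hhi b hb)⟩

lemma exists_inOpenInterval_of_chain {A B : Set (List Sig)} {loA hiA loB hiB : CStr Sig}
    (hloA : IsColexLB loA A) (hhiA : IsColexUB hiA A)
    (hloB : IsColexLB loB B) (hhiB : IsColexUB hiB B)
    {α₁ α₂ α₃ α₄ α₅ : List Sig} (h₁ : α₁ ∈ A) (h₂ : α₂ ∈ B) (h₄ : α₄ ∈ B) (h₅ : α₅ ∈ A)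
    (h₁₂ : cstrLt (toCStr α₁) (toCStr α₂)) (h₂₃ : cstrLt (toCStr α₂) (toCStr α₃))
    (h₃₄ : cstrLt (toCStr α₃) (toCStr α₄)) (h₄₅ : cstrLt (toCStr α₄) (toCStr α₅)) :
    ∃ α, inOpenInterval loA hiA α ∧ inOpenInterval loB hiB α :=
  ⟨α₃, inOpenInterval_of_lt_of_lt hloA hhiA h₁ h₅ (h₁₂.trans h₂₃) (h₃₄.trans h₄₅),
    inOpenInterval_of_lt_of_lt hloB hhiB h₂ h₄ h₂₃ h₃₄⟩

end Colex

/-- If `S` is an entangled set of states of a DFA, then the open co-lex intervals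
`(inf I_u, sup I_u)` and `(inf I_v, sup I_v)` of any two distinct `u, v ∈ S`
intersect. -/
theorem stmt_4 {Q Sig : Type*} [LinearOrder Sig]
    (δ : Q → Sig → Q) (s : Q) (S : Set Q) (hS : Entangled δ s S)
    (u v : Q) (hu : u ∈ S) (hv : v ∈ S) (huv : u ≠ v)
    (infU supU infV supV : CStr Sig)
    (hiu : IsColexInf infU (Ireach δ s u)) (hsu : IsColexSup supU (Ireach δ s u))
    (hiv : IsColexInf infV (Ireach δ s v)) (hsv : IsColexSup supV (Ireach δ s v)) :
    ∃ α : List Sig, inOpenInterval infU supU α ∧ inOpenInterval infV supV α := by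
  obtain ⟨a, hmono, hhit⟩ := hS
  obtain ⟨t₁, -, h₁⟩ := hhit u hu 0
  obtain ⟨t₂, h₁₂, h₂⟩ := hhit v hv t₁
  obtain ⟨t₃, h₂₃, h₃⟩ := hhit u hu t₂
  obtain ⟨t₄, h₃₄, h₄⟩ := hhit v hv t₃
  obtain ⟨t₅, h₄₅, h₅⟩ := hhit u hu t₄
  have hvu : v ≠ u := huv.symm
  have hne {i j : ℕ} : deltaStar δ s (a i) ≠ deltaStar δ s (a j) → a i ≠ a j :=
    ne_of_apply_ne _
  rcases hmono with hinc | hdec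
  · exact exists_inOpenInterval_of_chain hiu.1 hsu.1 hiv.1 hsv.1 h₁ h₂ h₄ h₅
      ((hinc _ _ h₁₂).cstrLt_toCStr_of_ne (hne (by rwa [h₁, h₂])))
      ((hinc _ _ h₂₃).cstrLt_toCStr_of_ne (hne (by rwa [h₂, h₃])))
      ((hinc _ _ h₃₄).cstrLt_toCStr_of_ne (hne (by rwa [h₃, h₄])))
      ((hinc _ _ h₄₅).cstrLt_toCStr_of_ne (hne (by rwa [h₄, h₅])))
  · exact exists_inOpenInterval_of_chain hiu.1 hsu.1 hiv.1 hsv.1 h₅ h₄ h₂ h₁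
      ((hdec _ _ h₄₅).cstrLt_toCStr_of_ne (hne (by rwa [h₄, h₅])))
      ((hdec _ _ h₃₄).cstrLt_toCStr_of_ne (hne (by rwa [h₃, h₄])))
      ((hdec _ _ h₂₃).cstrLt_toCStr_of_ne (hne (by rwa [h₂, h₃])))
      ((hdec _ _ h₁₂).cstrLt_toCStr_of_ne (hne (by rwa [h₁, h₂])))
end

section
/- Let G = (V, E) be the intersection graph of a family of open real intervals {(ℓ_u, r_u) : u ∈ V} with ℓ_u < r_u, with t = |V| vertices, and suppose every clique of G has size at most p'. Then for every p with 1 ≤ p ≤ p', the number of cliques of size exactly p in G is at most t · binom(p' − 1, p − 1). -/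
/-!
Send a `p`-clique `K` to its vertex `u` with the largest left endpoint. Every `v ∈ K` meets
`u`'s interval, so `ℓ v ≤ ℓ u < r v`. The intervals with this property all contain the points
just to the right of `ℓ u`, so they form a clique containing `u` and there are at most `p' - 1`
of them besides `u`; `K` is determined by `u` and a `(p - 1)`-subset of them.
-/

open Finset

theorem ncard_le_card_mul_choose_of_erase_subset {V : Type*} [Fintype V] [DecidableEq V]
    {F : Set (Finset V)} (S : V → Finset V) {m k : ℕ} (hS : ∀ u, #(S u) ≤ m)
    (hF : ∀ K ∈ F, #K = k + 1 ∧ ∃ u ∈ K, K.erase u ⊆ S u) :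
    F.ncard ≤ Fintype.card V * m.choose k := by
  have hsub : F ⊆ ↑(univ.biUnion fun u => ((S u).powersetCard k).image (insert u)) := by
    intro K hK
    obtain ⟨hcard, u, hu, herase⟩ := hF K hK
    simp only [coe_biUnion, coe_univ, Set.mem_univ, coe_image, Set.iUnion_true,
      Set.mem_iUnion, Set.mem_image, mem_coe, mem_powersetCard]
    exact ⟨u, K.erase u, ⟨herase, by rw [card_erase_of_mem hu, hcard]; rfl⟩, insert_erase hu⟩
  calc F.ncard
      ≤ #(univ.biUnion fun u => ((S u).powersetCard k).image (insert u)) := by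
        rw [← Set.ncard_coe_finset]; exact Set.ncard_le_ncard hsub (finite_toSet _)
    _ ≤ ∑ u, #(((S u).powersetCard k).image (insert u)) := card_biUnion_le
    _ ≤ ∑ u, #((S u).powersetCard k) := sum_le_sum fun u _ => card_image_le
    _ ≤ ∑ _u : V, m.choose k := sum_le_sum fun u _ => by
        rw [card_powersetCard]; exact Nat.choose_le_choose k (hS u)
    _ = Fintype.card V * m.choose k := by rw [sum_const, card_univ, smul_eq_mul]

section IntervalClique

variable {V α : Type*} [LinearOrder α] (ℓ r : V → α)

def IsIntervalClique (K : Finset V) : Prop :=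
  ∀ u ∈ K, ∀ v ∈ K, (Set.Ioo (ℓ u) (r u) ∩ Set.Ioo (ℓ v) (r v)).Nonempty

def stabbedBy [Fintype V] (x : α) : Finset V :=
  univ.filter fun v => ℓ v ≤ x ∧ x < r v

variable {ℓ r}

theorem isIntervalClique_stabbedBy [Fintype V] [DenselyOrdered α] (x : α) :
    IsIntervalClique ℓ r (stabbedBy ℓ r x) := by
  intro v hv w hw
  simp only [stabbedBy, mem_filter, mem_univ, true_and] at hv hw
  obtain ⟨y, hxy, hy⟩ := exists_between (lt_min hv.2 hw.2)
  exact ⟨y, ⟨hv.1.trans_lt hxy, hy.trans_le (min_le_left _ _)⟩,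
    ⟨hw.1.trans_lt hxy, hy.trans_le (min_le_right _ _)⟩⟩

theorem IsIntervalClique.left_lt_right {K : Finset V} (hK : IsIntervalClique ℓ r K) {u v : V}
    (hu : u ∈ K) (hv : v ∈ K) : ℓ u < r v := by
  obtain ⟨x, hxu, hxv⟩ := hK u hu v hv
  exact hxu.1.trans hxv.2

end IntervalClique

theorem stmt_6_general {V : Type*} [Fintype V] (ℓ r : V → ℝ) (hlr : ∀ u, ℓ u < r u)
    (p p' : ℕ)
    (hmax : ∀ K : Finset V,
      (∀ u ∈ K, ∀ v ∈ K, (Set.Ioo (ℓ u) (r u) ∩ Set.Ioo (ℓ v) (r v)).Nonempty) →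
      K.card ≤ p')
    (hp1 : 1 ≤ p) :
    {K : Finset V | K.card = p ∧
        ∀ u ∈ K, ∀ v ∈ K, (Set.Ioo (ℓ u) (r u) ∩ Set.Ioo (ℓ v) (r v)).Nonempty}.ncard
      ≤ Fintype.card V * (p' - 1).choose (p - 1) := by
  classical
  have hS u : #((stabbedBy ℓ r (ℓ u)).erase u) ≤ p' - 1 := by
    have hu : u ∈ stabbedBy ℓ r (ℓ u) := by simp [stabbedBy, hlr u]
    have := hmax _ (isIntervalClique_stabbedBy (ℓ u))
    rw [← insert_erase hu, card_insert_of_notMem (notMem_erase u _)] at this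
    omega
  refine ncard_le_card_mul_choose_of_erase_subset _ hS
    fun K ⟨hcard, (hK : IsIntervalClique ℓ r K)⟩ => ⟨by omega, ?_⟩
  obtain ⟨u, hu, hmaxu⟩ := exists_max_image K ℓ (card_pos.mp (by omega))
  refine ⟨u, hu, fun v hv => ?_⟩
  obtain ⟨hvu, hv⟩ := mem_erase.mp hv
  simpa [stabbedBy, hvu] using ⟨hmaxu v hv, hK.left_lt_right hu hv⟩

/-- In the intersection graph of `t` open real intervals whose maximum clique has
size at most `p'`, the number of cliques of size exactly `p` (with `1 ≤ p ≤ p'`) is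
at most `t * (p' - 1).choose (p - 1)`. -/
theorem stmt_6 {V : Type*} [Fintype V] (ℓ r : V → ℝ) (hlr : ∀ u, ℓ u < r u)
    (p p' : ℕ)
    (hmax : ∀ K : Finset V,
      (∀ u ∈ K, ∀ v ∈ K, (Set.Ioo (ℓ u) (r u) ∩ Set.Ioo (ℓ v) (r v)).Nonempty) →
      K.card ≤ p')
    (hp1 : 1 ≤ p) (hpp' : p ≤ p') :
    {K : Finset V | K.card = p ∧
        ∀ u ∈ K, ∀ v ∈ K, (Set.Ioo (ℓ u) (r u) ∩ Set.Ioo (ℓ v) (r v)).Nonempty}.ncard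
      ≤ Fintype.card V * (p' - 1).choose (p - 1) :=
  stmt_6_general ℓ r hlr p p' hmax hp1
end

section
/- Let A = (Q, Σ, δ, s, F) be a DFA in which the reversed transition relation is deterministic (i.e., for every state v and character a, there is at most one state u with δ(u, a) = v) and in which every state can reach the unique final state t (F = {t}). Then all states of A are pairwise distinguishable under the Myhill–Nerode relation: for every two distinct states u ≠ v there exists a string α with exactly one of δ(u, α) ∈ F, δ(v, α) ∈ F holding. -/
/-! A word read backwards from the final state `t` retraces at most one path when the
transition function is injective on sources, so two states sending the same word to `t`
coincide. Since every state `u` sends some word to `t`, that word separates `u` from any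
other state. -/

theorem eq_of_foldlM_eq_some {Q Sig : Type*} {δ : Q → Sig → Option Q}
    (hrev : ∀ u u' a v, δ u a = some v → δ u' a = some v → u = u')
    {l : List Sig} {u v w : Q} (hu : l.foldlM δ u = some w) (hv : l.foldlM δ v = some w) :
    u = v := by
  induction l generalizing u v with
  | nil => simp_all [List.foldlM]
  | cons a l ih =>
    obtain ⟨u', hu', hu⟩ := Option.bind_eq_some_iff.mp hu
    obtain ⟨v', hv', hv⟩ := Option.bind_eq_some_iff.mp hv
    exact hrev u v a u' hu' (ih hu hv ▸ hv')

/-- A reverse-deterministic DFA (partial transition function) in which every state can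
reach the unique final state `t` has all states pairwise distinguishable under the
Myhill-Nerode relation. -/
theorem stmt_12 {Q Sig : Type*} (δ : Q → Sig → Option Q) (t : Q)
    (hrev : ∀ u u' a v, δ u a = some v → δ u' a = some v → u = u')
    (hco : ∀ u : Q, ∃ a : List Sig, a.foldlM δ u = some t) :
    ∀ u v : Q, u ≠ v → ∃ a : List Sig,
      Xor' (a.foldlM δ u = some t) (a.foldlM δ v = some t) := by
  intro u v huv
  obtain ⟨a, ha⟩ := hco u
  exact ⟨a, Or.inl ⟨ha, fun hb => huv (eq_of_foldlM_eq_some hrev ha hb)⟩⟩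
end

section
/- Let A_min = (Q, Σ, δ, s, F) be a minimal DFA for a regular language L and assume width^D(L) = ent(A_min). If there exist a nonempty string γ and p pairwise distinct states u₁, …, u_p ∈ Q with δ(u_i, γ) = u_i for all i and with pairwise-intersecting open co-lex intervals ((inf I_{u_i}, sup I_{u_i}) ∩ (inf I_{u_j}, sup I_{u_j}) ≠ ∅ for all i, j), then width^D(L) ≥ p. -/
section
variable {Sig : Type*}

theorem toCStr_injective : Function.Injective (toCStr : List Sig → CStr Sig) := fun _ _ h =>
  List.reverse_injective (List.ext_getElem? (congrFun h))

theorem toCStr_append_of_lt {a c : List Sig} {i : ℕ} (hi : i < c.length) :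
    toCStr (a ++ c) i = toCStr c i := by
  simp only [toCStr, List.reverse_append]
  exact List.getElem?_append_left (by simpa using hi)

theorem toCStr_append_of_le {a c : List Sig} {i : ℕ} (hi : c.length ≤ i) :
    toCStr (a ++ c) i = toCStr a (i - c.length) := by
  simp only [toCStr, List.reverse_append]
  simpa using List.getElem?_append_right (l₁ := c.reverse) (l₂ := a.reverse) (by simpa using hi)

theorem toCStr_of_length_le {a : List Sig} {i : ℕ} (hi : a.length ≤ i) : toCStr a i = none :=
  List.getElem?_eq_none (by simpa using hi)

theorem omegaCStr_ne_none {γ : List Sig} (hγ : γ ≠ []) (i : ℕ) : omegaCStr γ i ≠ none := by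
  simpa [omegaCStr] using Nat.mod_lt i (List.length_pos_iff.2 hγ)

theorem toCStr_ne_omegaCStr {γ : List Sig} (hγ : γ ≠ []) (a : List Sig) :
    toCStr a ≠ omegaCStr γ := fun h =>
  omegaCStr_ne_none hγ a.length (h ▸ toCStr_of_length_le le_rfl)

theorem toCStr_append_flatten_replicate_of_lt {γ : List Sig} (w : List Sig) {m i : ℕ}
    (hi : i < m * γ.length) : toCStr (w ++ (List.replicate m γ).flatten) i = omegaCStr γ i := by
  induction m generalizing i with
  | zero => simp at hi
  | succ m ih =>
    rw [List.replicate_succ', List.flatten_append, List.flatten_singleton, ← List.append_assoc]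
    rcases lt_or_ge i γ.length with hiγ | hγi
    · rw [toCStr_append_of_lt hiγ, omegaCStr, Nat.mod_eq_of_lt hiγ]
      rfl
    · rw [toCStr_append_of_le hγi, ih (by rw [Nat.succ_mul] at hi; omega), omegaCStr, omegaCStr,
        ← Nat.mod_eq_sub_mod hγi]

theorem deltaStar_append {Q : Type*} (δ : Q → Sig → Q) (q : Q) (a b : List Sig) :
    deltaStar δ q (a ++ b) = deltaStar δ (deltaStar δ q a) b :=
  List.foldl_append

theorem deltaStar_flatten_replicate {Q : Type*} {δ : Q → Sig → Q} {q : Q} {γ : List Sig}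
    (hcyc : deltaStar δ q γ = q) (m : ℕ) : deltaStar δ q (List.replicate m γ).flatten = q := by
  induction m with
  | zero => rfl
  | succ m ih => rw [List.replicate_succ, List.flatten_cons, deltaStar_append, hcyc, ih]

variable [LinearOrder Sig]

/-- `cstrLt` is the lexicographic order on `ℕ → WithBot Sig`, an exhausted position being `⊥`. -/
def CStr.toLex (s : CStr Sig) : Lex (ℕ → WithBot Sig) := _root_.toLex s

theorem WithBot.lt_iff_none_or_some {x y : WithBot Sig} :
    x < y ↔ (x = none ∧ y ≠ none) ∨ ∃ a b, x = some a ∧ y = some b ∧ a < b := by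
  cases x <;> cases y <;> simp [WithBot.none_eq_bot]

theorem cstrLt_iff_toLex_lt {s t : CStr Sig} : cstrLt s t ↔ s.toLex < t.toLex :=
  exists_congr fun _ => and_congr Iff.rfl WithBot.lt_iff_none_or_some.symm

theorem cstrLe_iff_toLex_le {s t : CStr Sig} : cstrLe s t ↔ s.toLex ≤ t.toLex := by
  rw [cstrLe, cstrLt_iff_toLex_lt, le_iff_eq_or_lt]
  exact or_congr_left (toLex_inj (α := ℕ → WithBot Sig)).symm

theorem not_cstrLt_iff {s t : CStr Sig} : ¬ cstrLt s t ↔ cstrLe t s := by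
  rw [cstrLt_iff_toLex_lt, cstrLe_iff_toLex_le]
  exact not_lt

theorem List.lex_of_cstrLt_getElem? :
    ∀ {l r : List Sig}, cstrLt (fun i => l[i]?) (fun i => r[i]?) → List.Lex (· < ·) l r
  | _, [], ⟨_, _, hj⟩ => by simp at hj
  | [], _ :: _, _ => List.Lex.nil
  | x :: l, y :: r, ⟨0, _, hj⟩ => List.Lex.rel (by simpa using hj)
  | x :: l, y :: r, ⟨j + 1, hagree, hj⟩ => by
    obtain rfl : x = y := by simpa using hagree 0 j.succ_pos
    exact List.Lex.cons (lex_of_cstrLt_getElem?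
      ⟨j, fun i hi => by simpa using hagree (i + 1) (by omega), by simpa using hj⟩)

theorem colexLe_of_toLex_le {a b : List Sig} (h : (toCStr a).toLex ≤ (toCStr b).toLex) :
    ColexLe a b :=
  (cstrLe_iff_toLex_le.2 h).imp (fun h => toCStr_injective h) List.lex_of_cstrLt_getElem?

theorem cstrLt_append_right {a b : List Sig} (c : List Sig) (h : cstrLt (toCStr a) (toCStr b)) :
    cstrLt (toCStr (a ++ c)) (toCStr (b ++ c)) := by
  obtain ⟨j, hagree, hj⟩ := h
  refine ⟨j + c.length, fun i hi => ?_, ?_⟩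
  · rcases lt_or_ge i c.length with hic | hci
    · rw [toCStr_append_of_lt hic, toCStr_append_of_lt hic]
    · rw [toCStr_append_of_le hci, toCStr_append_of_le hci, hagree _ (by omega)]
  · simpa only [toCStr_append_of_le (Nat.le_add_left _ _), Nat.add_sub_cancel] using hj

theorem cstrLt_append_flatten_replicate_of_cstrLt_omegaCStr {γ x : List Sig} (hγ : γ ≠ [])
    (h : cstrLt (toCStr x) (omegaCStr γ)) {m : ℕ} (hm : x.length < m * γ.length)
    (w : List Sig) : cstrLt (toCStr x) (toCStr (w ++ (List.replicate m γ).flatten)) := by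
  obtain ⟨j, hagree, hj⟩ := h
  have hjx : j ≤ x.length := by
    by_contra! hxj
    exact omegaCStr_ne_none hγ _ ((hagree _ hxj).symm.trans (toCStr_of_length_le le_rfl))
  exact ⟨j, fun i hi =>
    (hagree i hi).trans (toCStr_append_flatten_replicate_of_lt w (by omega)).symm,
    by rwa [toCStr_append_flatten_replicate_of_lt w (by omega)]⟩

theorem append_flatten_replicate_cstrLt_of_omegaCStr_cstrLt {γ x : List Sig}
    (h : cstrLt (omegaCStr γ) (toCStr x)) {m : ℕ} (hm : x.length < m * γ.length) (w : List Sig) :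
    cstrLt (toCStr (w ++ (List.replicate m γ).flatten)) (toCStr x) := by
  obtain ⟨j, hagree, hj⟩ := h
  have hjx : j < x.length := by
    by_contra! hxj
    rcases hj with ⟨_, hx⟩ | ⟨_, _, _, hx, _⟩ <;> simp [toCStr_of_length_le hxj] at hx
  exact ⟨j, fun i hi =>
    (toCStr_append_flatten_replicate_of_lt w (by omega)).trans (hagree i hi),
    by rwa [toCStr_append_flatten_replicate_of_lt w (by omega)]⟩

theorem IsColexInf.exists_mem_cstrLt {w b : CStr Sig} {A : Set (List Sig)} (h : IsColexInf w A)
    (hb : cstrLt w b) : ∃ a ∈ A, cstrLt (toCStr a) b := by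
  by_contra! hA
  exact not_cstrLt_iff.2 (h.2 b fun a ha => not_cstrLt_iff.1 (hA a ha)) hb

theorem IsColexSup.exists_mem_cstrLt {w b : CStr Sig} {A : Set (List Sig)} (h : IsColexSup w A)
    (hb : cstrLt b w) : ∃ a ∈ A, cstrLt b (toCStr a) := by
  by_contra! hA
  exact not_cstrLt_iff.2 (h.2 b fun a ha => not_cstrLt_iff.1 (hA a ha)) hb

/-- The witness is the sequence `α_{t mod p} γ^{m t}` with `m |γ|` longer than every `α_i`. -/
theorem entangled_range_of_cycle {Q : Type*} (δ : Q → Sig → Q) (s : Q) {p : ℕ} [NeZero p]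
    {u : Fin p → Q} {γ : List Sig} (hγ : γ ≠ []) (hcyc : ∀ i, deltaStar δ (u i) γ = u i)
    {α : Fin p → List Sig} (hα : ∀ i, deltaStar δ s (α i) = u i)
    (hside : (∀ i, cstrLt (toCStr (α i)) (omegaCStr γ)) ∨
      (∀ i, cstrLt (omegaCStr γ) (toCStr (α i)))) :
    Entangled δ s (Set.range u) := by
  obtain ⟨i₀, hi₀⟩ := Finite.exists_max fun i => (α i).length
  set m := (α i₀).length + 1
  have hm : ∀ i, (α i).length < m * γ.length := fun i =>
    (Nat.lt_succ_of_le (hi₀ i)).trans_le (Nat.le_mul_of_pos_right m (List.length_pos_iff.2 hγ))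
  set a : ℕ → List Sig := fun t => α (Fin.ofNat p t) ++ (List.replicate (m * t) γ).flatten
  have ha_succ : ∀ t, a (t + 1) = (α (Fin.ofNat p (t + 1)) ++ (List.replicate m γ).flatten) ++
      (List.replicate (m * t) γ).flatten := by
    intro t
    simp only [a, Nat.mul_succ, add_comm (m * t), List.replicate_add, List.flatten_append,
      List.append_assoc]
  refine ⟨a, ?_, ?_⟩
  · rcases hside with hlt | hgt
    · have : StrictMono fun t => (toCStr (a t)).toLex := strictMono_nat_of_lt_succ fun t => by
        refine cstrLt_iff_toLex_lt.1 ?_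
        rw [ha_succ]
        exact cstrLt_append_right _
          (cstrLt_append_flatten_replicate_of_cstrLt_omegaCStr hγ (hlt _) (hm _) _)
      exact Or.inl fun t t' h => colexLe_of_toLex_le (this.monotone h)
    · have : StrictAnti fun t => (toCStr (a t)).toLex := strictAnti_nat_of_succ_lt fun t => by
        refine cstrLt_iff_toLex_lt.1 ?_
        rw [ha_succ]
        exact cstrLt_append_right _
          (append_flatten_replicate_cstrLt_of_omegaCStr_cstrLt (hgt _) (hm _) _)
      exact Or.inr fun t t' h => colexLe_of_toLex_le (this.antitone h)
  · rintro _ ⟨i, rfl⟩ t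
    refine ⟨p * t + i.val, Nat.le_add_right_of_le (Nat.le_mul_of_pos_left t (NeZero.pos p)), ?_⟩
    have hi : Fin.ofNat p (p * t + i) = i := by ext; simp [Nat.mod_eq_of_lt i.isLt]
    simp only [a, deltaStar_append, hi, hα, deltaStar_flatten_replicate (hcyc i)]

end

theorem stmt_14_general {Q Sig : Type*} [LinearOrder Sig]
    (δ : Q → Sig → Q) (s : Q) (widthD ent : ℕ)
    (hent : IsGreatest {k | ∃ S : Finset Q, S.card = k ∧ Entangled δ s ↑S} ent)
    (hwd : widthD = ent)
    (p : ℕ) (γ : List Sig) (hγ : γ ≠ [])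
    (u : Fin p → Q) (hinj : Function.Injective u)
    (hcyc : ∀ i, deltaStar δ (u i) γ = u i)
    (infI supI : Fin p → CStr Sig)
    (hinf : ∀ i, IsColexInf (infI i) (Ireach δ s (u i)))
    (hsup : ∀ i, IsColexSup (supI i) (Ireach δ s (u i)))
    (hint : ∀ i j, ∃ α : List Sig,
      inOpenInterval (infI i) (supI i) α ∧ inOpenInterval (infI j) (supI j) α) :
    p ≤ widthD := by
  subst hwd
  rcases p.eq_zero_or_pos with rfl | hp
  · exact Nat.zero_le _
  have : NeZero p := ⟨hp.ne'⟩
  obtain ⟨i₀, hi₀⟩ := Finite.exists_max fun i => (infI i).toLex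
  obtain ⟨j₀, hj₀⟩ := Finite.exists_min fun j => (supI j).toLex
  obtain ⟨b, hb₀, hb₁⟩ := hint i₀ j₀
  have hb_inf : ∀ i, cstrLt (infI i) (toCStr b) := fun i =>
    cstrLt_iff_toLex_lt.2 ((hi₀ i).trans_lt (cstrLt_iff_toLex_lt.1 hb₀.1))
  have hb_sup : ∀ i, cstrLt (toCStr b) (supI i) := fun i =>
    cstrLt_iff_toLex_lt.2 ((cstrLt_iff_toLex_lt.1 hb₁.2).trans_le (hj₀ i))
  have hrange : Entangled δ s (Set.range u) := by
    rcases lt_trichotomy (toCStr b).toLex (omegaCStr γ).toLex with hbγ | hbγ | hbγ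
    · choose α hαI hα using fun i => (hinf i).exists_mem_cstrLt (hb_inf i)
      exact entangled_range_of_cycle δ s hγ hcyc hαI (Or.inl fun i =>
        cstrLt_iff_toLex_lt.2 ((cstrLt_iff_toLex_lt.1 (hα i)).trans hbγ))
    · exact absurd (toLex_inj.1 hbγ) (toCStr_ne_omegaCStr hγ b)
    · choose α hαI hα using fun i => (hsup i).exists_mem_cstrLt (hb_sup i)
      exact entangled_range_of_cycle δ s hγ hcyc hαI (Or.inr fun i =>
        cstrLt_iff_toLex_lt.2 (hbγ.trans (cstrLt_iff_toLex_lt.1 (hα i))))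
  classical
  exact hent.2 ⟨Finset.univ.image u, by simp [Finset.card_image_of_injective _ hinj],
    by simpa using hrange⟩

/-- If the minimal DFA of `L` (with all states reachable) contains `p` pairwise
distinct states each carrying a cycle labeled by the same nonempty string `γ`, whose
open co-lex intervals pairwise intersect, and `width^D(L) = ent(A_min)` where `ent`
is the greatest cardinality of an entangled set, then `width^D(L) ≥ p`. -/
theorem stmt_14 {Q Sig : Type*} [Fintype Q] [LinearOrder Sig]
    (δ : Q → Sig → Q) (s : Q) (widthD ent : ℕ)
    (hacc : ∀ u : Q, ∃ a, deltaStar δ s a = u)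
    (hent : IsGreatest {k | ∃ S : Finset Q, S.card = k ∧ Entangled δ s ↑S} ent)
    (hwd : widthD = ent)
    (p : ℕ) (γ : List Sig) (hγ : γ ≠ [])
    (u : Fin p → Q) (hinj : Function.Injective u)
    (hcyc : ∀ i, deltaStar δ (u i) γ = u i)
    (infI supI : Fin p → CStr Sig)
    (hinf : ∀ i, IsColexInf (infI i) (Ireach δ s (u i)))
    (hsup : ∀ i, IsColexSup (supI i) (Ireach δ s (u i)))
    (hint : ∀ i j, ∃ α : List Sig,
      inOpenInterval (infI i) (supI i) α ∧ inOpenInterval (infI j) (supI j) α) :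
    p ≤ widthD :=
  stmt_14_general δ s widthD ent hent hwd p γ hγ u hinj hcyc infI supI hinf hsup hint
end

section
/- Let A = (Q, Σ, δ, s, F) be a DFA and let u', u'', v ∈ Q with δ(u', a) = v and δ(u'', b) = v where a ≺ b are characters, and suppose u' is reachable from s (so I_{u'} ≠ ∅). Then the co-lex infimum inf I_v of the set I_v of strings reaching v does not end with the character b; more precisely, every string in I_v ending with b is co-lexicographically strictly larger than some string in I_v ending with a, so removing the transition (u'', b, v) does not change inf I_v. -/
/-! A reachable `u'` gives a string `x a ∈ I_v`. Every lower bound of `I_v`, in particular its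
infimum, is co-lexicographically below `x a`, so its last character is at most `a < b`. -/

theorem deltaStar_append_singleton {Q Sig : Type*} (δ : Q → Sig → Q) (q : Q) (x : List Sig)
    (c : Sig) : deltaStar δ q (x ++ [c]) = δ (deltaStar δ q x) c := by
  simp [deltaStar]

theorem toCStr_append_singleton_zero {Sig : Type*} (x : List Sig) (c : Sig) :
    toCStr (x ++ [c]) 0 = some c := by
  simp [toCStr]

theorem strColex_append_singleton_of_lt {Sig : Type*} [LinearOrder Sig] {c d : Sig}
    (hcd : c < d) (α β : List Sig) : StrColex (α ++ [c]) (β ++ [d]) := by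
  simpa [StrColex] using List.Lex.rel hcd

theorem cstrLe.head_le {Sig : Type*} [LinearOrder Sig] {w t : CStr Sig} {c d : Sig}
    (hle : cstrLe w t) (hw : w 0 = some c) (ht : t 0 = some d) : c ≤ d := by
  rcases hle with rfl | ⟨j, hpre, hj⟩
  · exact (Option.some_injective _ (hw.symm.trans ht)).le
  · rcases Nat.eq_zero_or_pos j with rfl | hj0
    · rcases hj with ⟨hnone, -⟩ | ⟨c', d', hc', hd', hlt⟩
      · simp [hw] at hnone
      · rw [hw] at hc'; rw [ht] at hd'
        cases hc'; cases hd'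
        exact hlt.le
    · have := hpre 0 hj0
      rw [hw, ht] at this
      exact (Option.some_injective _ this).le

theorem stmt_18_general {Q Sig : Type*} [LinearOrder Sig]
    (δ : Q → Sig → Q) (s u' v : Q) (a b : Sig) (hab : a < b)
    (ha : δ u' a = v)
    (hacc : ∃ x : List Sig, deltaStar δ s x = u') :
    (∀ β : List Sig, deltaStar δ s (β ++ [b]) = v →
       ∃ α : List Sig, deltaStar δ s (α ++ [a]) = v ∧ StrColex (α ++ [a]) (β ++ [b]))
    ∧ (∀ w : CStr Sig, IsColexInf w (Ireach δ s v) → w 0 ≠ some b) := by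
  obtain ⟨x, hx⟩ := hacc
  have hxa : x ++ [a] ∈ Ireach δ s v := by
    simp only [Ireach, Set.mem_ofPred_eq, deltaStar_append_singleton, hx, ha]
  refine ⟨fun β _ => ⟨x, hxa, strColex_append_singleton_of_lt hab x β⟩, fun w hw hwb => ?_⟩
  exact absurd hab ((hw.1 _ hxa).head_le hwb (toCStr_append_singleton_zero x a)).not_gt

/-- If `δ(u', a) = v` and `δ(u'', b) = v` with `a ≺ b` and `u'` is reachable, then
every string in `I_v` ending with `b` is co-lexicographically strictly larger than
some string in `I_v` ending with `a`; consequently `inf I_v` does not end with `b`. -/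
theorem stmt_18 {Q Sig : Type*} [LinearOrder Sig]
    (δ : Q → Sig → Q) (s u' u'' v : Q) (a b : Sig) (hab : a < b)
    (ha : δ u' a = v) (hb : δ u'' b = v)
    (hacc : ∃ x : List Sig, deltaStar δ s x = u') :
    (∀ β : List Sig, deltaStar δ s (β ++ [b]) = v →
       ∃ α : List Sig, deltaStar δ s (α ++ [a]) = v ∧ StrColex (α ++ [a]) (β ++ [b]))
    ∧ (∀ w : CStr Sig, IsColexInf w (Ireach δ s v) → w 0 ≠ some b) :=
  stmt_18_general δ s u' v a b hab ha hacc
end
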